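/- arXiv:1706.04877 — 3 statements merged into one kernel-verified Lean document; each statement's English description precedes it below -/
import Mathlib

section
/- Let K = ℚ[x]/(x³ − x² − 24x + 27), the cyclic cubic field of conductor 73, with a ∈ K a root of x³ − x² − 24x + 27. Then the element ε₁ = (2/3)a² − (14/3)a + 7 lies in the ring of integers O_K and is a unit of O_K. -/
/-!
Eliminating `a` from `ε₁ = (2a² - 14a + 21)/3` shows that `ε₁` is a root of
`x³ - 49x² + 119x + 1`. A root of a monic integer cubic is integral, and constant term `1`
makes it a unit: `ε₁ · (49ε₁ - ε₁² - 119) = 1`.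
-/

open NumberField Polynomial

theorem isUnit_of_cubic_eq_zero {R : Type*} [CommRing R] {x b c : R}
    (hx : x ^ 3 + b * x ^ 2 + c * x + 1 = 0) : IsUnit x :=
  IsUnit.of_mul_eq_one (-(x ^ 2 + b * x + c)) (by linear_combination -hx)

theorem isIntegral_of_cubic_eq_zero {A : Type*} [CommRing A] {x : A} {b c : ℤ}
    (hx : x ^ 3 + b * x ^ 2 + c * x + 1 = 0) : IsIntegral ℤ x :=
  ⟨X ^ 3 + C b * X ^ 2 + C c * X + 1, by monicity!, by
    rw [← aeval_def]; simpa using hx⟩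

theorem NumberField.RingOfIntegers.exists_isUnit_of_cubic_eq_zero {K : Type*} [Field K]
    {x : K} {b c : ℤ} (hx : x ^ 3 + b * x ^ 2 + c * x + 1 = 0) :
    ∃ ε : 𝓞 K, (ε : K) = x ∧ IsUnit ε := by
  let ε : 𝓞 K := ⟨x, isIntegral_of_cubic_eq_zero hx⟩
  refine ⟨ε, rfl, isUnit_of_cubic_eq_zero (b := b) (c := c) ?_⟩
  exact RingOfIntegers.coe_injective (by push_cast; exact hx)

theorem eps_is_unit_conductor_73_general
    (K : Type*) [Field K] [NumberField K]
    (a : K) (ha : a ^ 3 - a ^ 2 - 24 * a + 27 = 0) :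
    ∃ ε : 𝓞 K, (ε : K) = (2 / 3) * a ^ 2 - (14 / 3) * a + 7 ∧ IsUnit ε := by
  apply RingOfIntegers.exists_isUnit_of_cubic_eq_zero (b := -49) (c := 119)
  push_cast
  linear_combination ((8 / 27 : K) * a ^ 3 - (160 / 27) * a ^ 2 + (872 / 27) * a - 136 / 3) * ha

/-- In the cyclic cubic field of conductor 73 defined by `x³ - x² - 24x + 27` with
root `a`, the element `ε₁ = (2/3)a² - (14/3)a + 7` is an algebraic integer and a unit
of the ring of integers. -/
theorem eps_is_unit_conductor_73
    (K : Type*) [Field K] [NumberField K] [IsGalois ℚ K]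
    (hdeg : Module.finrank ℚ K = 3)
    (a : K) (ha : a ^ 3 - a ^ 2 - 24 * a + 27 = 0) :
    ∃ ε : 𝓞 K, (ε : K) = (2 / 3) * a ^ 2 - (14 / 3) * a + 7 ∧ IsUnit ε :=
  eps_is_unit_conductor_73_general K a ha
end

section
/- Let K = ℚ[x]/(x³ − x² − 24x + 27) with a ∈ K a root of x³ − x² − 24x + 27, let O_K be its ring of integers, let ε₁ = (2/3)a² − (14/3)a + 7 ∈ O_K^× and π = (1/3)a² + (2/3)a − 11, a prime element of O_K of norm 3. Then ε₁² ≢ 1 (mod π²), i.e. the prime (π) is a non-Wieferich prime of O_K to the base ε₁. -/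
/-!
Writing `d = 2a² - 2a + 2`, one checks `ε² - 1 = π (d π + 22)` from the minimal polynomial
of `a`. Since `N(π) = 3`, `π` divides `3` but is not a unit, so it cannot divide `22`, which is
coprime to `3`; hence `π² ∤ ε² - 1`.
-/

open NumberField

section AbsNorm

variable {S : Type*} [CommRing S] [IsDedekindDomain S] [Module.Free ℤ S]

theorem Ideal.dvd_absNorm_span_singleton (π : S) : π ∣ (Ideal.absNorm (Ideal.span {π}) : S) :=
  Ideal.mem_span_singleton.mp (Ideal.absNorm_mem _)

theorem Ideal.not_isUnit_of_absNorm_span_singleton_ne_one {π : S}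
    (h : Ideal.absNorm (Ideal.span {π}) ≠ 1) : ¬IsUnit π := by
  rwa [← Ideal.span_singleton_eq_top, ← Ideal.absNorm_eq_one_iff]

end AbsNorm

theorem not_dvd_intCast_of_isCoprime {R : Type*} [CommRing R] {π : R} (hπ : ¬IsUnit π)
    {m n : ℤ} (hmn : IsCoprime m n) (hn : π ∣ (n : R)) : ¬π ∣ (m : R) :=
  fun hm ↦ hπ (hmn.intCast.isUnit_of_dvd' hm hn)

theorem mul_mul_add_notMem_span_singleton_sq {R : Type*} [CommRing R] [IsDomain R] {π u : R}
    (hπ : π ≠ 0) (hu : ¬π ∣ u) (d : R) : π * (d * π + u) ∉ Ideal.span {π} ^ 2 := by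
  rw [Ideal.span_singleton_pow, Ideal.mem_span_singleton, pow_two, mul_dvd_mul_iff_left hπ,
    dvd_add_right (dvd_mul_left π d)]
  exact hu

theorem pi_nonWieferich_conductor_73_general
    (K : Type*) [Field K] [NumberField K]
    (a : K) (ha : a ^ 3 - a ^ 2 - 24 * a + 27 = 0)
    (ε : (𝓞 K)ˣ) (hε : ((ε : 𝓞 K) : K) = (2 / 3) * a ^ 2 - (14 / 3) * a + 7)
    (π : 𝓞 K) (hπ : (π : K) = (1 / 3) * a ^ 2 + (2 / 3) * a - 11)
    (hπnorm : Ideal.absNorm (Ideal.span {π}) = 3) :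
    (ε : 𝓞 K) ^ 2 - 1 ∉ Ideal.span {π} ^ 2 := by
  have ha_int : IsIntegral ℤ a := by
    refine ⟨.X ^ 3 - .X ^ 2 - 24 * .X + 27, by monicity!, ?_⟩
    simp only [Polynomial.eval₂_add, Polynomial.eval₂_sub, Polynomial.eval₂_mul,
      Polynomial.eval₂_pow, Polynomial.eval₂_X, Polynomial.eval₂_ofNat]
    linear_combination ha
  set aO : 𝓞 K := ⟨a, ha_int⟩
  have h_factor : (ε : 𝓞 K) ^ 2 - 1 = π * ((2 * aO ^ 2 - 2 * aO + 2) * π + 22) := by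
    apply RingOfIntegers.coe_injective
    push_cast
    simp only [map_ofNat, hε, hπ, show ((aO : 𝓞 K) : K) = a from rfl]
    linear_combination (16 / 9 + 26 / 3 * a - 8 / 9 * a ^ 2 - 2 / 9 * a ^ 3) * ha
  have hπ_unit : ¬IsUnit π := Ideal.not_isUnit_of_absNorm_span_singleton_ne_one (by omega)
  have hπ_dvd_three : π ∣ ((3 : ℤ) : 𝓞 K) := by
    simpa [hπnorm] using Ideal.dvd_absNorm_span_singleton π
  have hπ_not_dvd : ¬π ∣ ((22 : ℤ) : 𝓞 K) :=
    not_dvd_intCast_of_isCoprime hπ_unit (by norm_num [Int.isCoprime_iff_gcd_eq_one])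
      hπ_dvd_three
  have hπ_ne_zero : π ≠ 0 := by
    rintro rfl
    simp at hπnorm
  rw [h_factor]
  exact mul_mul_add_notMem_span_singleton_sq hπ_ne_zero (by exact_mod_cast hπ_not_dvd) _

/-- In the cyclic cubic field of conductor 73 defined by `x³ - x² - 24x + 27` with root
`a`, the unit `ε₁ = (2/3)a² - (14/3)a + 7` satisfies `ε₁² ≢ 1 (mod π²)` for the prime
`π = (1/3)a² + (2/3)a - 11` of norm 3: `(π)` is non-Wieferich to the base `ε₁`. -/
theorem pi_nonWieferich_conductor_73
    (K : Type*) [Field K] [NumberField K] [IsGalois ℚ K]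
    (hdeg : Module.finrank ℚ K = 3)
    (a : K) (ha : a ^ 3 - a ^ 2 - 24 * a + 27 = 0)
    (ε : (𝓞 K)ˣ) (hε : ((ε : 𝓞 K) : K) = (2 / 3) * a ^ 2 - (14 / 3) * a + 7)
    (π : 𝓞 K) (hπ : (π : K) = (1 / 3) * a ^ 2 + (2 / 3) * a - 11)
    (hπprime : Prime π) (hπnorm : Ideal.absNorm (Ideal.span {π}) = 3) :
    (ε : 𝓞 K) ^ 2 - 1 ∉ Ideal.span {π} ^ 2 :=
  pi_nonWieferich_conductor_73_general K a ha ε hε π hπ hπnorm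
end

section
/- Let K = ℚ[x]/(x³ − x² − 24x + 27) with a ∈ K a root of x³ − x² − 24x + 27, let O_K be its ring of integers, and let π = (1/3)a² + (2/3)a − 11, a prime element of O_K of norm 3. Then the canonical map O_K^× → (O_K/(π²))^× is surjective; that is, {π} is an admissible set of primes for O_K. -/
open NumberField

/-!
The element `π` is a root of `X³ + 16X² + 61X + 3`, so `3 = -π(π² + 16π + 61)` and `9 ∈ (π²)`.
From this cubic, `g = -1 - 20π - 2π²` is a unit of `𝓞 K` with inverse `-121 - 32π - 2π²`, and
`g³ ≡ -1 mod π²` while `g² ≢ 1 mod π²` and `2 ∉ (π²)`. Hence the class of `g` has order `6`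
in `(𝓞 K ⧸ (π²))ˣ`, a group with fewer than `9` elements since the quotient has norm `9`;
so this group is cyclic generated by the class of the global unit `g`.
-/

lemma Subgroup.zpowers_eq_top_of_natCard_lt_two_mul_orderOf {G : Type*} [Group G] [Finite G]
    {x : G} (h : Nat.card G < 2 * orderOf x) : Subgroup.zpowers x = ⊤ := by
  obtain ⟨k, hk⟩ := _root_.orderOf_dvd_natCard x
  have hk_one : k = 1 := by
    have := Nat.card_pos (α := G)
    rcases k with _ | _ | k
    · omega
    · rfl
    · nlinarith
  exact Subgroup.eq_top_of_card_eq _ (by rw [Nat.card_zpowers, hk, hk_one, mul_one])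

lemma MonoidHom.surjective_of_zpowers_eq_top {G H : Type*} [Group G] [Group H] (f : G →* H)
    {x : G} (h : Subgroup.zpowers (f x) = ⊤) : Function.Surjective f := by
  intro y
  obtain ⟨k, hk⟩ : y ∈ Subgroup.zpowers (f x) := h ▸ Subgroup.mem_top y
  exact ⟨x ^ k, by rw [map_zpow]; exact hk⟩

lemma cubic_of_conductor73_root {K : Type*} [Field K] [CharZero K] {a : K}
    (ha : a ^ 3 - a ^ 2 - 24 * a + 27 = 0) :
    ((1 / 3) * a ^ 2 + (2 / 3) * a - 11) ^ 3 + 16 * ((1 / 3) * a ^ 2 + (2 / 3) * a - 11) ^ 2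
      + 61 * ((1 / 3) * a ^ 2 + (2 / 3) * a - 11) + 3 = 0 := by
  linear_combination ((a ^ 3 + 7 * a ^ 2 - 8 * a - 63) / 27) * ha

section CubicRoot

variable {R : Type*} [CommRing R] {π : R}

lemma Ideal.Quotient.mk_span_singleton_sq_eq_iff {x y : R} :
    Ideal.Quotient.mk (Ideal.span {π} ^ 2) x = Ideal.Quotient.mk _ y ↔ π ^ 2 ∣ x - y := by
  rw [Ideal.Quotient.eq, Ideal.span_singleton_pow, Ideal.mem_span_singleton]

lemma Units.map_mk_span_singleton_sq_pow_eq_one_iff (u : Rˣ) (n : ℕ) :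
    Units.map (Ideal.Quotient.mk (Ideal.span {π} ^ 2)).toMonoidHom u ^ n = 1 ↔
      π ^ 2 ∣ (u : R) ^ n - 1 := by
  rw [← map_pow, ← map_one (Units.map (Ideal.Quotient.mk (Ideal.span {π} ^ 2)).toMonoidHom),
    Units.ext_iff]
  exact Ideal.Quotient.mk_span_singleton_sq_eq_iff

variable (hp : π ^ 3 + 16 * π ^ 2 + 61 * π + 3 = 0)
include hp

def unitOfCubicRoot : Rˣ where
  val := -1 - 20 * π - 2 * π ^ 2
  inv := -121 - 32 * π - 2 * π ^ 2
  val_inv := by linear_combination (4 * π + 40) * hp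
  inv_val := by linear_combination (4 * π + 40) * hp

lemma sq_dvd_unitOfCubicRoot_pow_three_add_one :
    π ^ 2 ∣ (unitOfCubicRoot hp : R) ^ 3 + 1 :=
  ⟨350 - 1064 * π - 112 * π ^ 2, by
    simp only [unitOfCubicRoot]
    linear_combination (-8 * π ^ 3 - 112 * π ^ 2 - 20 * π) * hp⟩

lemma not_sq_dvd_unitOfCubicRoot_sq_sub_one [IsDomain R] (hπ : Prime π) :
    ¬ π ^ 2 ∣ (unitOfCubicRoot hp : R) ^ 2 - 1 := by
  set w := 28 + 160 * π + 16 * π ^ 2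
  have hw : (unitOfCubicRoot hp : R) ^ 2 - 1 = π * w := by
    simp only [unitOfCubicRoot]
    linear_combination (4 * π) * hp
  have hw_coprime : w + π * (9 * π ^ 2 + 128 * π + 389) = 1 := by linear_combination 9 * hp
  rw [hw, sq, mul_dvd_mul_iff_left hπ.ne_zero]
  intro hπw
  exact hπ.not_isUnit (isUnit_of_dvd_one (hw_coprime ▸ dvd_add hπw (dvd_mul_right _ _)))

lemma not_sq_dvd_two (hπ : ¬ IsUnit π) : ¬ π ^ 2 ∣ 2 := by
  rintro ⟨z, hz⟩
  have h9 : (9 : R) = π ^ 2 * (π ^ 2 + 16 * π + 61) ^ 2 := by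
    linear_combination (-π ^ 3 - 16 * π ^ 2 - 61 * π + 3) * hp
  exact hπ (IsUnit.of_mul_eq_one (π * (5 * z - (π ^ 2 + 16 * π + 61) ^ 2))
    (by linear_combination (-5) * hz + h9))

lemma orderOf_map_unitOfCubicRoot [IsDomain R] (hπ : Prime π) :
    orderOf (Units.map (Ideal.Quotient.mk (Ideal.span {π} ^ 2)).toMonoidHom
      (unitOfCubicRoot hp)) = 6 := by
  have hcube := sq_dvd_unitOfCubicRoot_pow_three_add_one hp
  set g : R := ↑(unitOfCubicRoot hp) with hg
  refine orderOf_eq_of_pow_and_pow_div_prime (by norm_num) ?_ fun p hp_prime hp_dvd => ?_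
  · rw [Units.map_mk_span_singleton_sq_pow_eq_one_iff, ← hg]
    have hfactor : g ^ 6 - 1 = (g ^ 3 + 1) * (g ^ 3 - 1) := by ring
    exact hfactor ▸ dvd_mul_of_dvd_left hcube _
  rw [Ne, Units.map_mk_span_singleton_sq_pow_eq_one_iff, ← hg]
  rcases hp_prime.dvd_mul.mp (show p ∣ 2 * 3 from hp_dvd) with h2 | h3
  · rw [(Nat.prime_dvd_prime_iff_eq hp_prime Nat.prime_two).mp h2]
    intro hcube_one
    have htwo : (2 : R) = (g ^ 3 + 1) - (g ^ 3 - 1) := by ring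
    exact not_sq_dvd_two hp hπ.not_isUnit (htwo ▸ dvd_sub hcube hcube_one)
  · rw [(Nat.prime_dvd_prime_iff_eq hp_prime Nat.prime_three).mp h3]
    exact not_sq_dvd_unitOfCubicRoot_sq_sub_one hp hπ

end CubicRoot

theorem pi_admissible_conductor_73_general
    (K : Type*) [Field K] [NumberField K]
    (a : K) (ha : a ^ 3 - a ^ 2 - 24 * a + 27 = 0)
    (π : 𝓞 K) (hπ : (π : K) = (1 / 3) * a ^ 2 + (2 / 3) * a - 11)
    (hπprime : Prime π) (hπnorm : Ideal.absNorm (Ideal.span {π}) = 3) :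
    Function.Surjective
      ⇑(Units.map (Ideal.Quotient.mk (Ideal.span {π} ^ 2)).toMonoidHom :
        (𝓞 K)ˣ →* ((𝓞 K) ⧸ Ideal.span {π} ^ 2)ˣ) := by
  have hp : π ^ 3 + 16 * π ^ 2 + 61 * π + 3 = 0 := by
    have h := cubic_of_conductor73_root ha
    rw [← hπ] at h
    apply RingOfIntegers.coe_injective
    simpa only [map_add, map_mul, map_pow, map_ofNat, map_zero] using h
  have hcard : Nat.card (𝓞 K ⧸ Ideal.span {π} ^ 2) = 9 := by
    rw [← Submodule.cardQuot_apply, ← Ideal.absNorm_apply, map_pow, hπnorm]; norm_num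
  have : Finite (𝓞 K ⧸ Ideal.span {π} ^ 2) := Nat.finite_of_card_ne_zero (by omega)
  have : Nontrivial (𝓞 K ⧸ Ideal.span {π} ^ 2) := Finite.one_lt_card_iff_nontrivial.mp (by omega)
  refine MonoidHom.surjective_of_zpowers_eq_top _ (x := unitOfCubicRoot hp)
    (Subgroup.zpowers_eq_top_of_natCard_lt_two_mul_orderOf ?_)
  rw [orderOf_map_unitOfCubicRoot hp hπprime]
  have := natCard_units_lt (𝓞 K ⧸ Ideal.span {π} ^ 2)
  omega

/-- In the cyclic cubic field of conductor 73 defined by `x³ - x² - 24x + 27` with root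
`a`, the prime `π = (1/3)a² + (2/3)a - 11` of norm 3 forms an admissible set: the
canonical map `(𝓞 K)ˣ → (𝓞 K ⧸ (π²))ˣ` is surjective. -/
theorem pi_admissible_conductor_73
    (K : Type*) [Field K] [NumberField K] [IsGalois ℚ K]
    (hdeg : Module.finrank ℚ K = 3)
    (a : K) (ha : a ^ 3 - a ^ 2 - 24 * a + 27 = 0)
    (π : 𝓞 K) (hπ : (π : K) = (1 / 3) * a ^ 2 + (2 / 3) * a - 11)
    (hπprime : Prime π) (hπnorm : Ideal.absNorm (Ideal.span {π}) = 3) :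
    Function.Surjective
      ⇑(Units.map (Ideal.Quotient.mk (Ideal.span {π} ^ 2)).toMonoidHom :
        (𝓞 K)ˣ →* ((𝓞 K) ⧸ Ideal.span {π} ^ 2)ˣ) :=
  pi_admissible_conductor_73_general K a ha π hπ hπprime hπnorm
end
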